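/- Let f be differentiable on an open interval containing [a,b] (a < b) with f' integrable, q ≥ 1, and suppose |f'|^q is quasi-convex on [a,b]. Then the trapezoid inequality holds: |(f(a) + f(b))/2 − (1/(b−a)) ∫_a^b f(x) dx| ≤ ((b−a)/8) [ (max{|f'(a)|^q, |f'((a+b)/2)|^q})^(1/q) + (max{|f'(b)|^q, |f'((a+b)/2)|^q})^(1/q) ]. -/

import Mathlib

/-!
Integrating by parts against the kernel `x - (a + b) / 2` turns the trapezoid error into
`(b - a)⁻¹ ∫ₐᵇ (x - (a + b) / 2) f' x dx`. On each half of `[a, b]`, quasi-convexity bounds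
`|f'|` by its larger value at the two endpoints of that half, and `∫ |x - (a + b) / 2|` over each
half equals `(b - a)² / 8`.
-/

open MeasureTheory Set

theorem QuasiconvexOn.le_max_of_mem_segment {𝕜 E β : Type*} [Semiring 𝕜] [PartialOrder 𝕜]
    [AddCommMonoid E] [SMul 𝕜 E] [LinearOrder β] {s : Set E} {g : E → β}
    (hg : QuasiconvexOn 𝕜 s g) {u v x : E} (hu : u ∈ s) (hv : v ∈ s) (hx : x ∈ segment 𝕜 u v) : g x ≤ max (g u) (g v) :=
  ((hg (max (g u) (g v))).segment_subset ⟨hu, le_max_left _ _⟩ ⟨hv, le_max_right _ _⟩ hx).2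

theorem quasiconvexOn_Icc_of_le_max {g : ℝ → ℝ} {a b : ℝ}
    (hg : ∀ x ∈ Icc a b, ∀ y ∈ Icc a b, ∀ α ∈ Icc (0 : ℝ) 1,
      g (α * x + (1 - α) * y) ≤ max (g x) (g y)) :
    QuasiconvexOn ℝ (Icc a b) g := by
  refine quasiconvexOn_iff_le_max.2 ⟨convex_Icc a b, fun x hx y hy α β hα hβ hαβ => ?_⟩
  obtain rfl : β = 1 - α := by linarith
  exact hg x hx y hy α ⟨hα, by linarith⟩

theorem abs_le_rpow_inv_of_quasiconvexOn {g : ℝ → ℝ} {s : Set ℝ} {q u v x : ℝ} (hq : 0 < q)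
    (hg : QuasiconvexOn ℝ s fun x => |g x| ^ q) (hu : u ∈ s) (hv : v ∈ s)
    (hx : x ∈ uIcc u v) : |g x| ≤ (max (|g u| ^ q) (|g v| ^ q)) ^ q⁻¹ := by
  rw [← segment_eq_uIcc] at hx
  refine (Real.le_rpow_inv_iff_of_pos (abs_nonneg _) ?_ hq).2
    (hg.le_max_of_mem_segment hu hv hx)
  exact (Real.rpow_nonneg (abs_nonneg _) q).trans (le_max_left _ _)

theorem integral_sub_midpoint_mul_deriv {f f' : ℝ → ℝ} {a b : ℝ}
    (hf : ∀ x ∈ uIcc a b, HasDerivAt f (f' x) x) (hf' : IntervalIntegrable f' volume a b) :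
    ∫ x in a..b, (x - (a + b) / 2) * f' x = (b - a) / 2 * (f a + f b) - ∫ x in a..b, f x := by
  have hkernel : ∀ x ∈ uIcc a b, HasDerivAt (fun y => y - (a + b) / 2) 1 x :=
    fun x _ => (hasDerivAt_id x).sub_const _
  rw [intervalIntegral.integral_mul_deriv_eq_deriv_mul hkernel hf intervalIntegrable_const hf']
  simp only [one_mul]
  ring

theorem abs_integral_mul_le_mul_integral_abs {g h : ℝ → ℝ} {a b K : ℝ} (hab : a ≤ b)
    (hh : ContinuousOn h (Icc a b)) (hg : IntervalIntegrable g volume a b)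
    (hK : ∀ x ∈ Icc a b, |g x| ≤ K) :
    |∫ x in a..b, h x * g x| ≤ (∫ x in a..b, |h x|) * K := by
  have hh' : ContinuousOn h (uIcc a b) := by rwa [uIcc_of_le hab]
  calc |∫ x in a..b, h x * g x| ≤ ∫ x in a..b, |h x * g x| :=
        intervalIntegral.abs_integral_le_integral_abs hab
    _ ≤ ∫ x in a..b, |h x| * K := by
        refine intervalIntegral.integral_mono_on hab (hg.continuousOn_mul hh').abs
          (hh'.abs.intervalIntegrable.mul_const K) fun x hx => ?_
        rw [abs_mul]
        exact mul_le_mul_of_nonneg_left (hK x hx) (abs_nonneg _)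
    _ = (∫ x in a..b, |h x|) * K := intervalIntegral.integral_mul_const K _

theorem integral_abs_sub_right {a b : ℝ} (hab : a ≤ b) :
    ∫ x in a..b, |x - b| = (b - a) ^ 2 / 2 := by
  rw [intervalIntegral.integral_congr (g := fun x => b - x) fun x hx => by
    rw [uIcc_of_le hab] at hx
    simp only [abs_of_nonpos (sub_nonpos.2 hx.2), neg_sub]]
  simp only [intervalIntegral.integral_sub intervalIntegrable_const
    intervalIntegral.intervalIntegrable_id, intervalIntegral.integral_const, integral_id,
    smul_eq_mul]
  ring

theorem integral_abs_sub_left {a b : ℝ} (hab : a ≤ b) :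
    ∫ x in a..b, |x - a| = (b - a) ^ 2 / 2 := by
  rw [intervalIntegral.integral_congr (g := fun x => x - a) fun x hx => by
    rw [uIcc_of_le hab] at hx
    simp only [abs_of_nonneg (sub_nonneg.2 hx.1)]]
  simp only [intervalIntegral.integral_sub intervalIntegral.intervalIntegrable_id
    intervalIntegrable_const, intervalIntegral.integral_const, integral_id, smul_eq_mul]
  ring

theorem abs_trapezoid_error_le {f f' : ℝ → ℝ} {a b K₁ K₂ : ℝ} (hab : a < b)
    (hf : ∀ x ∈ uIcc a b, HasDerivAt f (f' x) x) (hf' : IntervalIntegrable f' volume a b)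
    (hK₁ : ∀ x ∈ Icc a ((a + b) / 2), |f' x| ≤ K₁) (hK₂ : ∀ x ∈ Icc ((a + b) / 2) b, |f' x| ≤ K₂) :
    |(f a + f b) / 2 - (1 / (b - a)) * ∫ x in a..b, f x| ≤ (b - a) / 8 * (K₁ + K₂) := by
  set m := (a + b) / 2 with hm_def
  have hm : m ∈ Icc a b := ⟨by linarith, by linarith⟩
  have hba : 0 < b - a := by linarith
  have hf'_left : IntervalIntegrable f' volume a m :=
    hf'.mono_set (uIcc_subset_uIcc_left (Icc_subset_uIcc hm))
  have hf'_right : IntervalIntegrable f' volume m b :=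
    hf'.mono_set (uIcc_subset_uIcc_right (Icc_subset_uIcc hm))
  have hleft := abs_integral_mul_le_mul_integral_abs (h := fun x => x - m) hm.1
    (by fun_prop) hf'_left hK₁
  have hright := abs_integral_mul_le_mul_integral_abs (h := fun x => x - m) hm.2
    (by fun_prop) hf'_right hK₂
  rw [integral_abs_sub_right hm.1] at hleft
  rw [integral_abs_sub_left hm.2] at hright
  have hsplit := intervalIntegral.integral_add_adjacent_intervals
    (hf'_left.continuousOn_mul (g := fun x => x - m) (by fun_prop))
    (hf'_right.continuousOn_mul (g := fun x => x - m) (by fun_prop))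
  have hidentity : (f a + f b) / 2 - 1 / (b - a) * ∫ x in a..b, f x
      = 1 / (b - a) * ∫ x in a..b, (x - m) * f' x := by
    rw [integral_sub_midpoint_mul_deriv hf hf']
    field_simp
  rw [hidentity, ← hsplit, abs_mul, abs_of_pos (one_div_pos.2 hba)]
  calc 1 / (b - a) * |(∫ x in a..m, (x - m) * f' x) + ∫ x in m..b, (x - m) * f' x|
      ≤ 1 / (b - a) * ((m - a) ^ 2 / 2 * K₁ + (b - m) ^ 2 / 2 * K₂) := by
        gcongr
        exact (abs_add_le _ _).trans (add_le_add hleft hright)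
    _ = (b - a) / 8 * (K₁ + K₂) := by
        rw [hm_def]
        field_simp
        ring

theorem stmt_8 (f f' : ℝ → ℝ) (a b q c d : ℝ) (hab : a < b) (hq : 1 ≤ q)
    (hca : c < a) (hbd : b < d)
    (hf : ∀ x ∈ Set.Ioo c d, HasDerivAt f (f' x) x)
    (hint : IntervalIntegrable f' volume a b)
    (hqc : ∀ x ∈ Set.Icc a b, ∀ y ∈ Set.Icc a b, ∀ α ∈ Set.Icc (0:ℝ) 1,
      |f' (α * x + (1 - α) * y)| ^ q ≤ max (|f' x| ^ q) (|f' y| ^ q)) :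
    |(f a + f b) / 2 - (1 / (b - a)) * ∫ x in a..b, f x|
      ≤ (b - a) / 8 *
          ((max (|f' a| ^ q) (|f' ((a + b) / 2)| ^ q)) ^ (1 / q)
            + (max (|f' b| ^ q) (|f' ((a + b) / 2)| ^ q)) ^ (1 / q)) := by
  have hqc' := quasiconvexOn_Icc_of_le_max (g := fun x => |f' x| ^ q) hqc
  have hq0 : 0 < q := by linarith
  have hm : (a + b) / 2 ∈ Icc a b := ⟨by linarith, by linarith⟩
  have hderiv : ∀ x ∈ uIcc a b, HasDerivAt f (f' x) x := fun x hx => by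
    rw [uIcc_of_le hab.le] at hx
    exact hf x ⟨hca.trans_le hx.1, hx.2.trans_lt hbd⟩
  refine abs_trapezoid_error_le hab hderiv hint (fun x hx => ?_) (fun x hx => ?_) <;>
    rw [one_div]
  · exact abs_le_rpow_inv_of_quasiconvexOn hq0 hqc' (left_mem_Icc.2 hab.le) hm
      (Icc_subset_uIcc hx)
  · exact abs_le_rpow_inv_of_quasiconvexOn hq0 hqc' (right_mem_Icc.2 hab.le) hm
      (Icc_subset_uIcc' hx)
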